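/- Let V be a positive definite p×p real matrix, let α ∈ (0,1), let S : ℝᵖ → ℝ be Borel measurable, and let q ∈ ℝ satisfy N(0,V)({z : S(z) > q}) = α. Then for every nonzero c ∈ ℝᵖ: N(0,V)({z : S(z + c) > q}) ≤ Φ(z_α + √(cᵀ·V⁻¹·c)). (Neyman–Pearson bound, the key inequality in the proof of Theorem 5.) -/

import Mathlib

open MeasureTheory Filter Topology ProbabilityTheory Matrix

noncomputable section

/-- The standard normal density `φ(x) = exp(−x²/2)/√(2π)`. -/
def normalPDF (x : ℝ) : ℝ := Real.exp (-(x ^ 2) / 2) / Real.sqrt (2 * Real.pi)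

/-- The standard normal CDF `Φ`. -/
def stdNormalCDF (x : ℝ) : ℝ := ∫ t in Set.Iic x, normalPDF t

open scoped ComplexOrder in
/-- The positive semidefinite square root of a positive semidefinite matrix (the definition
`Matrix.PosSemidef.sqrt` of the older Mathlib, which has since been removed). -/
def Matrix.PosSemidef.sqrt {n : Type*} [Fintype n] [DecidableEq n] {𝕜 : Type*} [RCLike 𝕜]
    {A : Matrix n n 𝕜} (hA : A.PosSemidef) : Matrix n n 𝕜 :=
  hA.1.eigenvectorUnitary.1 * diagonal ((fun x : ℝ => (x : 𝕜)) ∘ (fun i => Real.sqrt (hA.1.eigenvalues i))) *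
    (star hA.1.eigenvectorUnitary : Matrix n n 𝕜)

/-- The Gaussian measure `N(c, V)` on `ℝᵖ`: the pushforward of the product of `p`
standard Gaussian measures under `z ↦ c + V^{1/2}·z`, where `V^{1/2}` is the positive
semidefinite square root of `V`. -/
def gaussianPi {p : ℕ} (c : Fin p → ℝ) {V : Matrix (Fin p) (Fin p) ℝ}
    (hV : V.PosSemidef) : Measure (Fin p → ℝ) :=
  Measure.map (fun z => c + hV.sqrt.mulVec z)
    (Measure.pi fun _ : Fin p => gaussianReal 0 1)


/-!
Write `γ` for the standard Gaussian measure on `ℝᵖ`. As `N(0,V)` is the image of `γ` under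
`z ↦ V^{1/2} z`, with `d = V^{-1/2} c` (so that `|d|² = cᵀ V⁻¹ c`) the claim becomes:
if `γ A = Φ(z_α)` then `γ (A - d) ≤ Φ(z_α + |d|)`.
The translate `N(d, I)` has density `exp (⟪d, z⟫ - |d|² / 2)` with respect to `γ`, so by the
Neyman–Pearson lemma, among sets of `γ`-measure `Φ(z_α)`, its mass is maximised by the half-space
`R = {z | -z_α |d| ≤ ⟪d, z⟫}` where this density is largest. Since `⟪d, z⟫ ∼ N(0, |d|²)` under
`γ`, one gets `γ R = Φ(z_α)` and `γ (R - d) = Φ(z_α + |d|)`.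
-/

open scoped NNReal ENNReal ComplexOrder MatrixOrder
open Real

lemma Matrix.PosSemidef.sqrt_eq_cfc_sqrt {n 𝕜 : Type*} [Fintype n] [DecidableEq n] [RCLike 𝕜]
    {A : Matrix n n 𝕜} (hA : A.PosSemidef) : hA.sqrt = CFC.sqrt A := by
  rw [CFC.sqrt_eq_cfc, cfc_nnreal_eq_real _ A, hA.1.cfc_eq]
  simp [Matrix.PosSemidef.sqrt, IsHermitian.cfc, Function.comp_def,
    max_eq_left (hA.eigenvalues_nonneg _)]

lemma Matrix.PosSemidef.sqrt_mul_self {n 𝕜 : Type*} [Fintype n] [DecidableEq n] [RCLike 𝕜]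
    {A : Matrix n n 𝕜} (hA : A.PosSemidef) : hA.sqrt * hA.sqrt = A := by
  rw [hA.sqrt_eq_cfc_sqrt, CFC.sqrt_mul_sqrt_self A hA.nonneg]

lemma Matrix.PosSemidef.sqrt_transpose {n : Type*} [Fintype n] [DecidableEq n]
    {A : Matrix n n ℝ} (hA : A.PosSemidef) : hA.sqrtᵀ = hA.sqrt := by
  rw [hA.sqrt_eq_cfc_sqrt]
  exact (CFC.sqrt_nonneg A).isSelfAdjoint

lemma Matrix.dotProduct_mul_self_inv_mulVec {n R : Type*} [Fintype n] [DecidableEq n] [CommRing R]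
    {Q : Matrix n n R} (hQ : Qᵀ = Q) (c : n → R) :
    c ⬝ᵥ (Q * Q)⁻¹ *ᵥ c = Q⁻¹ *ᵥ c ⬝ᵥ Q⁻¹ *ᵥ c := by
  rw [mul_inv_rev, ← mulVec_mulVec, dotProduct_mulVec, ← mulVec_transpose, transpose_nonsing_inv,
    hQ]

lemma sqrt_dotProduct_self_pos {ι : Type*} [Fintype ι] {d : ι → ℝ} (hd : d ≠ 0) :
    0 < √(d ⬝ᵥ d) :=
  Real.sqrt_pos.2 ((dotProduct_self_star_nonneg d).lt_of_ne' (dotProduct_self_eq_zero.not.2 hd))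

open Set in
theorem MeasureTheory.Measure.pi_withDensity {ι : Type*} [Fintype ι] {α : ι → Type*}
    [∀ i, MeasurableSpace (α i)] (μ : ∀ i, Measure (α i)) [∀ i, IsProbabilityMeasure (μ i)]
    {f : ∀ i, α i → ℝ≥0∞} (hf : ∀ i, Measurable (f i)) (hf_ne_top : ∀ i x, f i x ≠ ∞) :
    Measure.pi (fun i => (μ i).withDensity (f i))
      = (Measure.pi μ).withDensity fun x => ∏ i, f i (x i) := by
  have := fun i => SigmaFinite.withDensity_of_ne_top' (μ := μ i) (hf_ne_top i)
  refine Measure.pi_eq fun s hs => ?_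
  have hf_ind (i : ι) : Measurable ((s i).indicator (f i)) := (hf i).indicator (hs i)
  have h_ind : (univ.pi s).indicator (fun x => ∏ i, f i (x i))
      = fun x => ∏ i, (s i).indicator (f i) (x i) := by
    ext x
    by_cases hx : x ∈ univ.pi s
    · rw [mem_univ_pi] at hx
      simp [indicator_of_mem, hx]
    · obtain ⟨i, hi⟩ : ∃ i, x i ∉ s i := by simpa using hx
      rw [indicator_of_notMem hx]
      exact (Finset.prod_eq_zero (Finset.mem_univ i) (indicator_of_notMem hi _)).symm
  rw [withDensity_apply _ (.univ_pi hs), ← lintegral_indicator (.univ_pi hs), h_ind,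
    lintegral_prod_eq_prod_lintegral_of_indepFun _ _
      (iIndepFun_pi fun i => (hf_ind i).aemeasurable)
      fun i => (hf_ind i).comp (measurable_pi_apply i)]
  refine Finset.prod_congr rfl fun i _ => ?_
  rw [(measurePreserving_eval μ i).lintegral_comp (hf_ind i), lintegral_indicator (hs i),
    withDensity_apply _ (hs i)]

open Set in
theorem MeasureTheory.withDensity_apply_le_of_neymanPearson {α : Type*} [MeasurableSpace α]
    {μ : Measure α} [IsFiniteMeasure μ] {f : α → ℝ≥0∞} {k : ℝ≥0∞} {A R : Set α}
    (hA : MeasurableSet A) (hR : MeasurableSet R) (hf_ge : ∀ x ∈ R, k ≤ f x)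
    (hf_le : ∀ x ∉ R, f x ≤ k) (hAR : μ A ≤ μ R) :
    μ.withDensity f A ≤ μ.withDensity f R := by
  have h_out : μ.withDensity f (A \ R) ≤ k * μ (A \ R) := by
    rw [withDensity_apply _ (hA.diff hR), ← setLIntegral_const]
    exact setLIntegral_mono' (hA.diff hR) fun x hx => hf_le x hx.2
  have h_in : k * μ (R \ A) ≤ μ.withDensity f (R \ A) := by
    rw [withDensity_apply _ (hR.diff hA), ← setLIntegral_const]
    exact setLIntegral_mono' (hR.diff hA) fun x hx => hf_ge x hx.1
  have h_diff : μ (A \ R) ≤ μ (R \ A) := by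
    refine (ENNReal.add_le_add_iff_left (measure_ne_top μ (A ∩ R))).1 ?_
    rwa [measure_inter_add_sdiff A hR, inter_comm, measure_inter_add_sdiff R hA]
  calc μ.withDensity f A = μ.withDensity f (A ∩ R) + μ.withDensity f (A \ R) :=
        (measure_inter_add_sdiff A hR).symm
    _ ≤ μ.withDensity f (A ∩ R) + μ.withDensity f (R \ A) :=
        add_le_add_right (h_out.trans ((mul_le_mul_right h_diff k).trans h_in)) _
    _ = μ.withDensity f R := by rw [inter_comm, measure_inter_add_sdiff R hA]

lemma normalPDF_eq_gaussianPDFReal : normalPDF = gaussianPDFReal 0 1 := by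
  funext x
  simp [normalPDF, gaussianPDFReal, div_eq_inv_mul]

lemma gaussianReal_Iic (x : ℝ) :
    gaussianReal 0 1 (Set.Iic x) = ENNReal.ofReal (stdNormalCDF x) := by
  rw [gaussianReal_apply_eq_integral 0 one_ne_zero, stdNormalCDF, normalPDF_eq_gaussianPDFReal]

lemma gaussianReal_Ici (a : ℝ) :
    gaussianReal 0 1 (Set.Ici a) = ENNReal.ofReal (stdNormalCDF (-a)) := by
  calc gaussianReal 0 1 (Set.Ici a) = (gaussianReal 0 1).map (fun x => -x) (Set.Iic (-a)) := by
        rw [Measure.map_apply measurable_neg measurableSet_Iic]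
        congr 1
        ext x
        simp
    _ = _ := by rw [gaussianReal_map_neg, neg_zero, gaussianReal_Iic]

lemma gaussianReal_one_eq_withDensity (m : ℝ) :
    gaussianReal m 1
      = (gaussianReal 0 1).withDensity fun x => ENNReal.ofReal (exp (m * x - m ^ 2 / 2)) := by
  rw [gaussianReal_of_var_ne_zero m one_ne_zero, gaussianReal_of_var_ne_zero 0 one_ne_zero,
    ← withDensity_mul _ (measurable_gaussianPDF 0 1) (by fun_prop)]
  congr 1
  funext x
  rw [Pi.mul_apply, gaussianPDF, gaussianPDF, ← ENNReal.ofReal_mul (gaussianPDFReal_nonneg _ _ _),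
    gaussianPDFReal, gaussianPDFReal, mul_assoc _ (exp _), ← exp_add]
  congr 3
  push_cast
  ring

section StandardGaussian

variable {ι : Type*} [Fintype ι]

local notation "γ" => Measure.pi fun _ => gaussianReal 0 1

lemma pi_gaussianReal_map_add (d : ι → ℝ) :
    (γ).map (· + d) = (γ).withDensity fun z => ENNReal.ofReal (exp (d ⬝ᵥ z - d ⬝ᵥ d / 2)) := by
  have h_shift : MeasurePreserving (· + d) γ
      (Measure.pi fun i => (gaussianReal 0 1).withDensity
        fun x => ENNReal.ofReal (exp (d i * x - d i ^ 2 / 2))) :=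
    measurePreserving_pi _ _ fun i => ⟨measurable_add_const _, by
      rw [← gaussianReal_one_eq_withDensity, gaussianReal_map_add_const, zero_add]⟩
  rw [h_shift.map_eq, Measure.pi_withDensity _ (fun i => by fun_prop)
    fun _ _ => ENNReal.ofReal_ne_top]
  congr 1
  funext z
  rw [← ENNReal.ofReal_prod_of_nonneg fun i _ => (exp_pos _).le, ← exp_sum,
    Finset.sum_sub_distrib, ← Finset.sum_div]
  simp [dotProduct, sq]

lemma pi_gaussianReal_map_dotProduct (d : ι → ℝ) :
    (γ).map (d ⬝ᵥ ·) = gaussianReal 0 (d ⬝ᵥ d).toNNReal := by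
  refine Measure.ext_of_charFun (funext fun t => ?_)
  have h_prod (z : ι → ℝ) : Complex.exp (t * ↑(d ⬝ᵥ z) * Complex.I)
      = ∏ i, Complex.exp (↑(t * d i) * z i * Complex.I) := by
    simp_rw [← Complex.exp_sum, dotProduct, Complex.ofReal_sum, Finset.mul_sum, Finset.sum_mul]
    push_cast
    exact congrArg _ (Finset.sum_congr rfl fun i _ => by ring)
  rw [charFun_apply_real, integral_map (by fun_prop) (by fun_prop)]
  simp_rw [h_prod]
  rw [integral_fintype_prod_eq_prod
    (f := fun i (x : ℝ) => Complex.exp (↑(t * d i) * x * Complex.I))]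
  simp_rw [← charFun_apply_real, charFun_gaussianReal, ← Complex.exp_sum]
  congr 1
  rw [Real.coe_toNNReal (d ⬝ᵥ d) (dotProduct_self_star_nonneg d)]
  push_cast
  simp [dotProduct]
  rw [Finset.sum_mul, Finset.sum_div]
  exact Finset.sum_congr rfl fun i _ => by ring

lemma pi_gaussianReal_setOf_le_dotProduct {d : ι → ℝ} (hd : d ≠ 0) (a : ℝ) :
    γ {z | a ≤ d ⬝ᵥ z} = ENNReal.ofReal (stdNormalCDF (-a / √(d ⬝ᵥ d))) := by
  have hdd : 0 ≤ d ⬝ᵥ d := dotProduct_self_star_nonneg d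
  have h_law : gaussianReal 0 (d ⬝ᵥ d).toNNReal = (gaussianReal 0 1).map (√(d ⬝ᵥ d) * ·) := by
    rw [gaussianReal_map_const_mul, mul_zero, mul_one]
    congr 1
    ext
    simp [Real.sq_sqrt hdd, hdd]
  rw [show {z | a ≤ d ⬝ᵥ z} = (d ⬝ᵥ ·) ⁻¹' Set.Ici a from rfl,
    ← Measure.map_apply (by fun_prop) measurableSet_Ici, pi_gaussianReal_map_dotProduct, h_law,
    Measure.map_apply (by fun_prop) measurableSet_Ici,
    Set.preimage_const_mul_Ici₀ _ (sqrt_dotProduct_self_pos hd), gaussianReal_Ici, neg_div]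

theorem pi_gaussianReal_map_add_apply_le {d : ι → ℝ} (hd : d ≠ 0) {A : Set (ι → ℝ)}
    (hA : MeasurableSet A) {z : ℝ} (hAz : γ A ≤ ENNReal.ofReal (stdNormalCDF z)) :
    (γ).map (· + d) A ≤ ENNReal.ofReal (stdNormalCDF (z + √(d ⬝ᵥ d))) := by
  have hδ := sqrt_dotProduct_self_pos hd
  have hδ_sq : √(d ⬝ᵥ d) ^ 2 = d ⬝ᵥ d := Real.sq_sqrt (dotProduct_self_star_nonneg d)
  set R := {x : ι → ℝ | -(z * √(d ⬝ᵥ d)) ≤ d ⬝ᵥ x}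
  have hR : MeasurableSet R := measurableSet_le measurable_const (by fun_prop)
  have hR_mass : γ R = ENNReal.ofReal (stdNormalCDF z) := by
    rw [pi_gaussianReal_setOf_le_dotProduct hd, neg_neg, mul_div_cancel_right₀ _ hδ.ne']
  have hR_power : (γ).map (· + d) R = ENNReal.ofReal (stdNormalCDF (z + √(d ⬝ᵥ d))) := by
    have h_pre : (· + d) ⁻¹' R = {x | -(z * √(d ⬝ᵥ d)) - d ⬝ᵥ d ≤ d ⬝ᵥ x} := by
      ext x
      simp [R, dotProduct_add]
    rw [Measure.map_apply (measurable_add_const d) hR, h_pre,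
      pi_gaussianReal_setOf_le_dotProduct hd]
    congr 2
    field_simp
    linear_combination -hδ_sq
  rw [← hR_power, pi_gaussianReal_map_add]
  refine withDensity_apply_le_of_neymanPearson
    (k := ENNReal.ofReal (exp (-(z * √(d ⬝ᵥ d)) - d ⬝ᵥ d / 2)))
    hA hR (fun x hx => ?_) (fun x hx => ?_) (hAz.trans hR_mass.ge)
  · have hx' : -(z * √(d ⬝ᵥ d)) ≤ d ⬝ᵥ x := hx
    exact ENNReal.ofReal_le_ofReal (exp_le_exp.2 (by linarith))
  · have hx' : d ⬝ᵥ x < -(z * √(d ⬝ᵥ d)) := not_le.1 hx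
    exact ENNReal.ofReal_le_ofReal (exp_le_exp.2 (by linarith))

lemma gaussianPi_zero_apply {p : ℕ} {V : Matrix (Fin p) (Fin p) ℝ} (hV : V.PosSemidef)
    {s : Set (Fin p → ℝ)} (hs : MeasurableSet s) :
    gaussianPi 0 hV s = γ ((hV.sqrt *ᵥ ·) ⁻¹' s) := by
  simp only [gaussianPi, zero_add]
  exact Measure.map_apply (by fun_prop) hs

end StandardGaussian

theorem neyman_pearson_power_bound_general
    {p : ℕ} (V : Matrix (Fin p) (Fin p) ℝ) (hV : V.PosDef)
    (α : ℝ)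
    (S : (Fin p → ℝ) → ℝ) (hS : Measurable S)
    (q : ℝ) (hq : gaussianPi 0 hV.posSemidef {z | q < S z} = ENNReal.ofReal α)
    (zα : ℝ) (hzα : stdNormalCDF zα = α) :
    ∀ c : Fin p → ℝ, c ≠ 0 →
      gaussianPi 0 hV.posSemidef {z | q < S (z + c)} ≤
        ENNReal.ofReal (stdNormalCDF (zα + Real.sqrt (c ⬝ᵥ V⁻¹.mulVec c))) := by
  intro c hc
  set Q := hV.posSemidef.sqrt
  have hQQ : Q * Q = V := hV.posSemidef.sqrt_mul_self
  have hQ : IsUnit Q.det :=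
    (isUnit_iff_isUnit_det Q).1 (isUnit_of_mul_isUnit_left (hQQ ▸ hV.isUnit))
  set d := Q⁻¹ *ᵥ c
  have hQd : Q *ᵥ d = c := by rw [mulVec_mulVec, mul_nonsing_inv _ hQ, one_mulVec]
  have hd : d ≠ 0 := fun h => hc (by rw [← hQd, h, mulVec_zero])
  have hB : MeasurableSet {x | q < S x} := measurableSet_lt measurable_const hS
  set A := (Q *ᵥ ·) ⁻¹' {x | q < S x}
  have hA : MeasurableSet A := (by fun_prop : Measurable (Q *ᵥ ·)) hB
  calc gaussianPi 0 hV.posSemidef {z | q < S (z + c)}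
      = (Measure.pi fun _ => gaussianReal 0 1).map (· + d) A := by
        rw [gaussianPi_zero_apply _ (measurableSet_lt measurable_const (by fun_prop)),
          Measure.map_apply (measurable_add_const d) hA]
        congr 1
        ext z
        change q < S (Q *ᵥ z + c) ↔ q < S (Q *ᵥ (z + d))
        rw [mulVec_add, hQd]
    _ ≤ ENNReal.ofReal (stdNormalCDF (zα + √(d ⬝ᵥ d))) :=
        pi_gaussianReal_map_add_apply_le hd hA (by rw [← gaussianPi_zero_apply _ hB, hq, hzα])
    _ = _ := by rw [← hQQ, dotProduct_mul_self_inv_mulVec hV.posSemidef.sqrt_transpose]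

/-- The Neyman–Pearson bound used in the proof of Theorem 5: if a level-`α` test based
on `S` has critical value `q` under `N(0,V)`, its power at shift `c ≠ 0` is at most
`Φ(z_α + √(cᵀ·V⁻¹·c))`. -/
theorem neyman_pearson_power_bound
    {p : ℕ} (V : Matrix (Fin p) (Fin p) ℝ) (hV : V.PosDef)
    (α : ℝ) (hα0 : 0 < α) (hα1 : α < 1)
    (S : (Fin p → ℝ) → ℝ) (hS : Measurable S)
    (q : ℝ) (hq : gaussianPi 0 hV.posSemidef {z | q < S z} = ENNReal.ofReal α)
    (zα : ℝ) (hzα : stdNormalCDF zα = α) :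
    ∀ c : Fin p → ℝ, c ≠ 0 →
      gaussianPi 0 hV.posSemidef {z | q < S (z + c)} ≤
        ENNReal.ofReal (stdNormalCDF (zα + Real.sqrt (c ⬝ᵥ V⁻¹.mulVec c))) :=
  neyman_pearson_power_bound_general V hV α S hS q hq zα hzα

end
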